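/- arXiv:2407.05462 — 7 statements merged into one kernel-verified Lean document; each statement's English description precedes it below -/
import Mathlib

section
/- The set of diagonal matrices belonging to SL₂(L) is exactly T(L); in particular, for every nonzero t ∈ L the matrix diag(t) = [[t,0],[0,t⁻¹]] lies in SL₂(L), and conversely every diagonal matrix in SL₂(L) is diag(s) for some s in the subgroup of Kˣ generated by L \ {0}. -/
open Matrix Pointwise

noncomputable section

variable {K : Type*} [Field K]

abbrev SL2 (K : Type*) [Field K] := Matrix.SpecialLinearGroup (Fin 2) K

/-- `a(t) = [[1,t],[0,1]]`. -/
def aMat (t : K) : SL2 K :=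
  ⟨!![1, t; 0, 1], by simp [Matrix.det_fin_two_of]⟩

/-- `b(t) = [[1,0],[t,1]]`. -/
def bMat (t : K) : SL2 K :=
  ⟨!![1, 0; t, 1], by simp [Matrix.det_fin_two_of]⟩

/-- `diag(s) = [[s,0],[0,s⁻¹]]`. -/
def diagMat (s : Kˣ) : SL2 K :=
  ⟨!![(s : K), 0; 0, ((s⁻¹ : Kˣ) : K)], by simp [Matrix.det_fin_two_of]⟩

/-- `w = [[0,1],[1,0]]`, in `SL₂` since `char K = 2`. -/
def wMat (K : Type*) [Field K] [CharP K 2] : SL2 K :=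
  ⟨!![0, 1; 1, 0], by simp [Matrix.det_fin_two_of, CharTwo.neg_eq]⟩

def setA (L : AddSubgroup K) : Set (SL2 K) := {g | ∃ t ∈ L, g = aMat t}

def setAop (L : AddSubgroup K) : Set (SL2 K) := {g | ∃ t ∈ L, g = bMat t}

/-- Timmesfeld's `SL₂(L)`. -/
def SL2L (L : AddSubgroup K) : Subgroup (SL2 K) := Subgroup.closure (setA L ∪ setAop L)

/-- The subgroup of `Kˣ` generated by the nonzero elements of `L`. -/
def Tgen (L : AddSubgroup K) : Subgroup Kˣ := Subgroup.closure {u : Kˣ | (u : K) ∈ L}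

def setTL (L : AddSubgroup K) : Set (SL2 K) := {g | ∃ s ∈ Tgen L, g = diagMat s}

def setTK (K : Type*) [Field K] : Set (SL2 K) := {g | ∃ s : Kˣ, g = diagMat s}

def setB (L : AddSubgroup K) : Set (SL2 K) := setTL L * setA L

/-! Every element of `SL₂(L)` lies in `B ∪ BwA`, where `B = T(L)·A` and `w = [[0,1],[1,0]]`:
this union contains `1` and is stable under left multiplication by `B` and by `w`, and in
characteristic 2 we have `b(t) = w a(t) w`. A diagonal matrix cannot lie in `BwA`, whose
lower-left entries are nonzero, and the diagonal matrices in `B` are exactly `T(L)`.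
Conversely, for `0 ≠ t ∈ L` the identity `b(t) = diag(t)⁻¹ a(t) w a(t⁻¹)` together with
`w = a(1) b(1) a(1)` puts `diag(t)` in `SL₂(L)`; here `t⁻¹ = (t⁻¹)²·t ∈ L`. -/

@[simp]
theorem coe_aMat (t : K) : (aMat t : Matrix (Fin 2) (Fin 2) K) = !![1, t; 0, 1] := rfl

@[simp]
theorem coe_bMat (t : K) : (bMat t : Matrix (Fin 2) (Fin 2) K) = !![1, 0; t, 1] := rfl

@[simp]
theorem coe_diagMat (s : Kˣ) :
    (diagMat s : Matrix (Fin 2) (Fin 2) K) = !![(s : K), 0; 0, ((s⁻¹ : Kˣ) : K)] := rfl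

@[simp]
theorem coe_wMat [CharP K 2] : (wMat K : Matrix (Fin 2) (Fin 2) K) = !![0, 1; 1, 0] := rfl

theorem aMat_mul_aMat (t u : K) : aMat t * aMat u = aMat (t + u) := by
  ext i j; simp [add_comm]

theorem aMat_zero : aMat (0 : K) = 1 := by
  ext i j; simp [one_fin_two]

theorem diagMat_mul_diagMat (s s' : Kˣ) : diagMat s * diagMat s' = diagMat (s * s') := by
  ext i j; simp [mul_comm]

theorem diagMat_one : diagMat (1 : Kˣ) = 1 := by
  ext i j; simp [one_fin_two]

theorem aMat_mul_diagMat (t : K) (s : Kˣ) :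
    aMat t * diagMat s = diagMat s * aMat (((s⁻¹ : Kˣ) : K) ^ 2 * t) := by
  ext i j; simp; field_simp

def diagHom : Kˣ →* SL2 K where
  toFun := diagMat
  map_one' := diagMat_one
  map_mul' s s' := (diagMat_mul_diagMat s s').symm

section CharTwo

variable [CharP K 2]

theorem aMat_mul_self (t : K) : aMat t * aMat t = 1 := by
  rw [aMat_mul_aMat, CharTwo.add_self_eq_zero, aMat_zero]

theorem bMat_mul_self (t : K) : bMat t * bMat t = 1 := by
  ext i j; fin_cases i <;> fin_cases j <;> simp [CharTwo.add_self_eq_zero]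

theorem wMat_mul_self : wMat K * wMat K = 1 := by
  ext i j; simp [one_fin_two]

theorem wMat_mul_aMat_mul_wMat (t : K) : wMat K * aMat t * wMat K = bMat t := by
  ext i j; simp

theorem bMat_zero : bMat (0 : K) = 1 := by
  rw [← wMat_mul_aMat_mul_wMat, aMat_zero, mul_one, wMat_mul_self]

theorem wMat_mul_diagMat (s : Kˣ) : wMat K * diagMat s = diagMat s⁻¹ * wMat K := by
  ext i j; simp

theorem aMat_one_mul_bMat_one_mul_aMat_one : aMat 1 * bMat 1 * aMat 1 = wMat K := by
  ext i j; fin_cases i <;> fin_cases j <;> simp [CharTwo.add_self_eq_zero]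

theorem bMat_eq_diagMat_inv_mul {t : K} (ht : t ≠ 0) :
    bMat t = diagMat (Units.mk0 t ht)⁻¹ * aMat t * wMat K * aMat t⁻¹ := by
  ext i j; fin_cases i <;> fin_cases j <;> simp [ht, CharTwo.add_self_eq_zero]

end CharTwo

section Bruhat

variable {L : AddSubgroup K}

theorem inv_mem_of_sq_mul_mem (hL : ∀ s t : K, t ∈ L → s ^ 2 * t ∈ L) {t : K} (ht : t ∈ L) :
    t⁻¹ ∈ L := by
  rcases eq_or_ne t 0 with rfl | ht0
  · simp
  · simpa [sq, mul_assoc, ht0] using hL t⁻¹ t ht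

theorem mem_setB {g : SL2 K} :
    g ∈ setB L ↔ ∃ s ∈ Tgen L, ∃ t ∈ L, diagMat s * aMat t = g := by
  constructor
  · rintro ⟨_, ⟨s, hs, rfl⟩, _, ⟨t, ht, rfl⟩, rfl⟩
    exact ⟨s, hs, t, ht, rfl⟩
  · rintro ⟨s, hs, t, ht, rfl⟩
    exact ⟨_, ⟨s, hs, rfl⟩, _, ⟨t, ht, rfl⟩, rfl⟩

theorem diagMat_mem_setB {s : Kˣ} (hs : s ∈ Tgen L) : diagMat s ∈ setB L :=
  mem_setB.mpr ⟨s, hs, 0, L.zero_mem, by rw [aMat_zero, mul_one]⟩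

theorem one_mem_setB : (1 : SL2 K) ∈ setB L :=
  diagMat_one (K := K) ▸ diagMat_mem_setB (one_mem _)

theorem aMat_mem_setB {t : K} (ht : t ∈ L) : aMat t ∈ setB L :=
  mem_setB.mpr ⟨1, one_mem _, t, ht, by rw [diagMat_one, one_mul]⟩

theorem mul_mem_setB (hL : ∀ s t : K, t ∈ L → s ^ 2 * t ∈ L) {g h : SL2 K}
    (hg : g ∈ setB L) (hh : h ∈ setB L) : g * h ∈ setB L := by
  obtain ⟨s, hs, t, ht, rfl⟩ := mem_setB.mp hg
  obtain ⟨s', hs', t', ht', rfl⟩ := mem_setB.mp hh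
  refine mem_setB.mpr ⟨s * s', mul_mem hs hs', _, L.add_mem (hL ((s'⁻¹ : Kˣ) : K) t ht) ht', ?_⟩
  rw [← diagMat_mul_diagMat, ← aMat_mul_aMat, mul_assoc (diagMat s) (aMat t),
    ← mul_assoc (aMat t), aMat_mul_diagMat]
  simp only [mul_assoc]

variable [CharP K 2]

def bigCell (L : AddSubgroup K) : Set (SL2 K) :=
  {g | ∃ b ∈ setB L, ∃ t ∈ L, b * wMat K * aMat t = g}

def bruhatCells (L : AddSubgroup K) : Set (SL2 K) := setB L ∪ bigCell L

theorem mul_mem_bruhatCells (hL : ∀ s t : K, t ∈ L → s ^ 2 * t ∈ L) {b g : SL2 K}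
    (hb : b ∈ setB L) (hg : g ∈ bruhatCells L) : b * g ∈ bruhatCells L := by
  rcases hg with hg | ⟨b', hb', t, ht, rfl⟩
  · exact Or.inl (mul_mem_setB hL hb hg)
  · exact Or.inr ⟨b * b', mul_mem_setB hL hb hb', t, ht, by simp only [mul_assoc]⟩

theorem mul_aMat_mem_bruhatCells (hL : ∀ s t : K, t ∈ L → s ^ 2 * t ∈ L) {g : SL2 K}
    (hg : g ∈ bruhatCells L) {t : K} (ht : t ∈ L) : g * aMat t ∈ bruhatCells L := by
  rcases hg with hg | ⟨b, hb, u, hu, rfl⟩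
  · exact Or.inl (mul_mem_setB hL hg (aMat_mem_setB ht))
  · exact Or.inr ⟨b, hb, u + t, L.add_mem hu ht, by rw [← aMat_mul_aMat]; simp only [mul_assoc]⟩

theorem bMat_mem_bruhatCells (hL : ∀ s t : K, t ∈ L → s ^ 2 * t ∈ L) {t : K} (ht : t ∈ L) :
    bMat t ∈ bruhatCells L := by
  rcases eq_or_ne t 0 with rfl | ht0
  · exact Or.inl (bMat_zero (K := K) ▸ one_mem_setB)
  · have hinv : (Units.mk0 t ht0)⁻¹ ∈ Tgen L := inv_mem (Subgroup.subset_closure ht)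
    exact Or.inr ⟨_, mem_setB.mpr ⟨_, hinv, t, ht, rfl⟩, t⁻¹, inv_mem_of_sq_mul_mem hL ht,
      (bMat_eq_diagMat_inv_mul ht0).symm⟩

theorem wMat_mul_mem_bruhatCells (hL : ∀ s t : K, t ∈ L → s ^ 2 * t ∈ L) {g : SL2 K}
    (hg : g ∈ bruhatCells L) : wMat K * g ∈ bruhatCells L := by
  rcases hg with hg | ⟨b, hb, u, hu, rfl⟩
  · obtain ⟨s, hs, t, ht, rfl⟩ := mem_setB.mp hg
    exact Or.inr ⟨diagMat s⁻¹, diagMat_mem_setB (inv_mem hs), t, ht,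
      by rw [← mul_assoc, wMat_mul_diagMat]⟩
  · obtain ⟨s, hs, t, ht, rfl⟩ := mem_setB.mp hb
    have hconj : wMat K * (diagMat s * aMat t * wMat K * aMat u) =
        diagMat s⁻¹ * (bMat t * aMat u) := by
      rw [← wMat_mul_aMat_mul_wMat, ← mul_assoc, ← mul_assoc, ← mul_assoc, ← mul_assoc,
        wMat_mul_diagMat]
      simp only [mul_assoc]
    rw [hconj]
    exact mul_mem_bruhatCells hL (diagMat_mem_setB (inv_mem hs))
      (mul_aMat_mem_bruhatCells hL (bMat_mem_bruhatCells hL ht) hu)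

theorem inv_eq_self_of_mem_generators {x : SL2 K}
    (hx : x ∈ setA L ∪ setAop L) : x⁻¹ = x := by
  rcases hx with ⟨t, -, rfl⟩ | ⟨t, -, rfl⟩
  · exact inv_eq_of_mul_eq_one_right (aMat_mul_self t)
  · exact inv_eq_of_mul_eq_one_right (bMat_mul_self t)

theorem mem_bruhatCells_of_mem_SL2L (hL : ∀ s t : K, t ∈ L → s ^ 2 * t ∈ L) {g : SL2 K}
    (hg : g ∈ SL2L L) : g ∈ bruhatCells L := by
  have hgen : ∀ x ∈ setA L ∪ setAop L, ∀ y ∈ bruhatCells L, x * y ∈ bruhatCells L := by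
    rintro _ (⟨t, ht, rfl⟩ | ⟨t, ht, rfl⟩) y hy
    · exact mul_mem_bruhatCells hL (aMat_mem_setB ht) hy
    · rw [← wMat_mul_aMat_mul_wMat, mul_assoc, mul_assoc]
      exact wMat_mul_mem_bruhatCells hL
        (mul_mem_bruhatCells hL (aMat_mem_setB ht) (wMat_mul_mem_bruhatCells hL hy))
  induction hg using Subgroup.closure_induction_left with
  | one => exact Or.inl one_mem_setB
  | mul_left x hx y _ ih => exact hgen x hx y ih
  | inv_mul_cancel x hx y _ ih =>
    rw [inv_eq_self_of_mem_generators hx]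
    exact hgen x hx y ih

theorem mem_setTL_of_mem_bruhatCells {g : SL2 K} (hg : g ∈ bruhatCells L)
    (h01 : (g : Matrix (Fin 2) (Fin 2) K) 0 1 = 0) (h10 : (g : Matrix (Fin 2) (Fin 2) K) 1 0 = 0) :
    g ∈ setTL L := by
  rcases hg with hg | ⟨b, hb, u, -, rfl⟩
  · obtain ⟨s, hs, t, -, rfl⟩ := mem_setB.mp hg
    obtain rfl : t = 0 := by simpa using h01
    exact ⟨s, hs, by rw [aMat_zero, mul_one]⟩
  · obtain ⟨s, -, t, -, rfl⟩ := mem_setB.mp hb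
    simp at h10

end Bruhat

section Generation

variable {L : AddSubgroup K}

theorem aMat_mem_SL2L {t : K} (ht : t ∈ L) : aMat t ∈ SL2L L :=
  Subgroup.subset_closure (Or.inl ⟨t, ht, rfl⟩)

theorem bMat_mem_SL2L {t : K} (ht : t ∈ L) : bMat t ∈ SL2L L :=
  Subgroup.subset_closure (Or.inr ⟨t, ht, rfl⟩)

variable [CharP K 2]

theorem wMat_mem_SL2L (h1 : (1 : K) ∈ L) : wMat K ∈ SL2L L :=
  aMat_one_mul_bMat_one_mul_aMat_one (K := K) ▸
    mul_mem (mul_mem (aMat_mem_SL2L h1) (bMat_mem_SL2L h1)) (aMat_mem_SL2L h1)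

theorem diagMat_inv_mem_SL2L (hL : ∀ s t : K, t ∈ L → s ^ 2 * t ∈ L) (h1 : (1 : K) ∈ L)
    {t : K} (ht : t ∈ L) (ht0 : t ≠ 0) : diagMat (Units.mk0 t ht0)⁻¹ ∈ SL2L L := by
  have hdiag : diagMat (Units.mk0 t ht0)⁻¹ = bMat t * (aMat t * wMat K * aMat t⁻¹)⁻¹ := by
    rw [bMat_eq_diagMat_inv_mul ht0]; group
  rw [hdiag]
  exact mul_mem (bMat_mem_SL2L ht) (inv_mem (mul_mem (mul_mem (aMat_mem_SL2L ht)
    (wMat_mem_SL2L h1)) (aMat_mem_SL2L (inv_mem_of_sq_mul_mem hL ht))))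

theorem diagMat_mem_SL2L_of_val_mem (hL : ∀ s t : K, t ∈ L → s ^ 2 * t ∈ L)
    (h1 : (1 : K) ∈ L) {u : Kˣ} (hu : (u : K) ∈ L) : diagMat u ∈ SL2L L := by
  have hu' : (u : K)⁻¹ ∈ L := inv_mem_of_sq_mul_mem hL hu
  have hinv : (Units.mk0 _ (inv_ne_zero u.ne_zero))⁻¹ = u := by ext; simp
  exact hinv ▸ diagMat_inv_mem_SL2L hL h1 hu' _

theorem diagMat_mem_SL2L (hL : ∀ s t : K, t ∈ L → s ^ 2 * t ∈ L) (h1 : (1 : K) ∈ L)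
    {s : Kˣ} (hs : s ∈ Tgen L) : diagMat s ∈ SL2L L := by
  suffices Tgen L ≤ (SL2L L).comap diagHom from this hs
  exact (Subgroup.closure_le _).mpr fun u hu => diagMat_mem_SL2L_of_val_mem hL h1 hu

end Generation

theorem diagonal_subgroup_of_SL2L_general
    [CharP K 2]
    (L : AddSubgroup K) (hsq : ∀ x : K, x ^ 2 ∈ L)
    (hvs : ∀ s t : K, t ∈ L → s ^ 2 * t ∈ L) :
    ({g : SL2 K | g ∈ SL2L L ∧ (g : Matrix (Fin 2) (Fin 2) K) 0 1 = 0 ∧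
        (g : Matrix (Fin 2) (Fin 2) K) 1 0 = 0} = setTL L) ∧
      ∀ (t : K) (ht : t ≠ 0), t ∈ L → diagMat (Units.mk0 t ht) ∈ SL2L L := by
  have h1 : (1 : K) ∈ L := by simpa using hsq 1
  refine ⟨Set.ext fun g => ⟨fun ⟨hg, h01, h10⟩ => ?_, ?_⟩, fun t ht htL => ?_⟩
  · exact mem_setTL_of_mem_bruhatCells (mem_bruhatCells_of_mem_SL2L hvs hg) h01 h10
  · rintro ⟨s, hs, rfl⟩
    exact ⟨diagMat_mem_SL2L hvs h1 hs, by simp, by simp⟩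
  · exact diagMat_mem_SL2L_of_val_mem hvs h1 htL

/-- The diagonal matrices in `SL₂(L)` are exactly `T(L)`; in particular `diag(t) ∈ SL₂(L)`
for every nonzero `t ∈ L`. -/
theorem diagonal_subgroup_of_SL2L
    [CharP K 2] (himperf : ¬ Function.Surjective fun x : K => x ^ 2)
    (L : AddSubgroup K) (hsq : ∀ x : K, x ^ 2 ∈ L)
    (hvs : ∀ s t : K, t ∈ L → s ^ 2 * t ∈ L) :
    ({g : SL2 K | g ∈ SL2L L ∧ (g : Matrix (Fin 2) (Fin 2) K) 0 1 = 0 ∧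
        (g : Matrix (Fin 2) (Fin 2) K) 1 0 = 0} = setTL L) ∧
      ∀ (t : K) (ht : t ≠ 0), t ∈ L → diagMat (Units.mk0 t ht) ∈ SL2L L :=
  diagonal_subgroup_of_SL2L_general L hsq hvs

end
end

section
/- Timmesfeld's group SL₂(L) is a simple group (it is nontrivial and its only normal subgroups are itself and the trivial subgroup). -/
open Matrix Pointwise

noncomputable section

variable {K : Type*} [Field K]

/-!
`SL₂(L)` preserves `Ω = L ∪ {∞} ⊆ ℙ¹(K)`: a matrix `[[a, b], [c, d]]` maps `∞` into `Ω` iff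
`a c ∈ L`, and in characteristic `2` this condition on both columns is stable under products.
A normal subgroup `H ≠ 1` contains an element moving `∞`; conjugating it by some `a(s)` brings
any point of `Ω` back to `∞`, so `H` is transitive on `Ω`. Elements fixing `∞` normalise
`U = {a(t)}`, whence `SL₂(L) = H U`, and `U` being abelian, `H` contains every commutator.
Finally `SL₂(L)` is perfect: `a(u) = ⁅diag(σ), a(u / (σ - 1)²)⁆` for any `σ ∈ L ∖ {0, 1}`
(e.g. the square of a non-square of `K`), and `b(u) = w a(u) w⁻¹`.
-/

open scoped commutatorElement

variable {L : AddSubgroup K}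

lemma div_mem_of_mul_mem (hvs : ∀ s t : K, t ∈ L → s ^ 2 * t ∈ L) {x y : K} (h : x * y ∈ L) :
    x / y ∈ L := by
  rcases eq_or_ne y 0 with rfl | hy
  · simp
  · convert hvs y⁻¹ _ h using 1
    field_simp

namespace SL2

@[simp] lemma coe_aMat (t : K) : (aMat t : Matrix (Fin 2) (Fin 2) K) = !![1, t; 0, 1] := rfl
@[simp] lemma coe_bMat (t : K) : (bMat t : Matrix (Fin 2) (Fin 2) K) = !![1, 0; t, 1] := rfl
@[simp] lemma coe_wMat [CharP K 2] : (wMat K : Matrix (Fin 2) (Fin 2) K) = !![0, 1; 1, 0] := rfl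
@[simp] lemma coe_diagMat (σ : Kˣ) :
    (diagMat σ : Matrix (Fin 2) (Fin 2) K) = !![(σ : K), 0; 0, ((σ⁻¹ : Kˣ) : K)] := rfl

lemma det_fin_two_eq_one (g : SL2 K) : g 0 0 * g 1 1 - g 0 1 * g 1 0 = 1 :=
  (Matrix.det_fin_two (g : Matrix (Fin 2) (Fin 2) K)).symm.trans g.det_coe

lemma aMat_add (s t : K) : aMat (s + t) = aMat s * aMat t := by
  ext i j; fin_cases i <;> fin_cases j <;> simp [add_comm]

lemma aMat_zero : aMat (0 : K) = 1 := by
  ext i j; fin_cases i <;> fin_cases j <;> simp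

lemma aMat_inv (t : K) : (aMat t)⁻¹ = aMat (-t) := by
  rw [inv_eq_iff_mul_eq_one, ← aMat_add, add_neg_cancel, aMat_zero]

def aHom : Multiplicative K →* SL2 K where
  toFun t := aMat t.toAdd
  map_one' := aMat_zero
  map_mul' s t := aMat_add s.toAdd t.toAdd

lemma bMat_add (s t : K) : bMat (s + t) = bMat s * bMat t := by
  ext i j; fin_cases i <;> fin_cases j <;> simp

lemma bMat_zero : bMat (0 : K) = 1 := by
  ext i j; fin_cases i <;> fin_cases j <;> simp

lemma bMat_inv (t : K) : (bMat t)⁻¹ = bMat (-t) := by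
  rw [inv_eq_iff_mul_eq_one, ← bMat_add, add_neg_cancel, bMat_zero]

lemma wMat_inv [CharP K 2] : (wMat K)⁻¹ = wMat K := by
  rw [inv_eq_iff_mul_eq_one]
  ext i j; fin_cases i <;> fin_cases j <;> simp

lemma wMat_eq_aMat_mul_bMat_mul_aMat [CharP K 2] : wMat K = aMat 1 * bMat 1 * aMat 1 := by
  ext i j
  fin_cases i <;> fin_cases j <;>
    simp [Matrix.mul_apply, Fin.sum_univ_two, CharTwo.add_self_eq_zero]

lemma conj_wMat_aMat [CharP K 2] (t : K) : wMat K * aMat t * (wMat K)⁻¹ = bMat t := by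
  ext i j; fin_cases i <;> fin_cases j <;> simp [Matrix.mul_apply, Fin.sum_univ_two, wMat_inv]

lemma diagMat_mk0_eq [CharP K 2] {σ : K} (hσ : σ ≠ 0) :
    diagMat (Units.mk0 σ hσ) = aMat σ * bMat σ⁻¹ * aMat σ * wMat K := by
  ext i j
  fin_cases i <;> fin_cases j <;>
    simp [Matrix.mul_apply, Fin.sum_univ_two, hσ, CharTwo.add_self_eq_zero]

lemma conj_aMat_of_apply_one_zero {h : SL2 K} (h10 : h 1 0 = 0) (t : K) :
    h * aMat t * h⁻¹ = aMat (h 0 0 ^ 2 * t) := by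
  have hdet : h 0 0 * h 1 1 = 1 := by simpa [h10] using det_fin_two_eq_one h
  ext i j
  fin_cases i <;> fin_cases j <;> simp [Matrix.mul_apply, Fin.sum_univ_two,
    Matrix.SpecialLinearGroup.coe_inv, Matrix.adjugate_fin_two, h10, hdet, mul_comm (h 1 1)]
  ring

lemma commutatorElement_diagMat_aMat (σ : Kˣ) (u : K) :
    ⁅diagMat σ, aMat u⁆ = aMat ((σ : K) ^ 2 * u - u) := by
  rw [commutatorElement_def, conj_aMat_of_apply_one_zero (by simp), aMat_inv, ← aMat_add,
    sub_eq_add_neg]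
  simp

lemma conj_aMat_mul_apply_one_zero (s : K) (g γ : SL2 K) :
    (aMat s * g * (aMat s)⁻¹ * γ) 1 0 = g 1 0 * γ 0 0 + (g 1 1 - s * g 1 0) * γ 1 0 := by
  simp [Matrix.mul_apply, Matrix.vecMul, dotProduct, Fin.sum_univ_two, aMat_inv,
    -mul_eq_mul_right_iff]
  ring

lemma conj_wMat_apply_one_zero [CharP K 2] (g : SL2 K) :
    (wMat K * g * (wMat K)⁻¹) 1 0 = g 0 1 := by
  simp [Matrix.mul_apply, Matrix.vecMul, dotProduct, Fin.sum_univ_two, wMat_inv]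

lemma conj_bMat_apply_one_zero (t : K) (g : SL2 K) :
    (bMat t * g * (bMat t)⁻¹) 1 0 = g 1 0 + t * (g 0 0 - g 1 1) - t ^ 2 * g 0 1 := by
  simp [Matrix.mul_apply, Matrix.vecMul, dotProduct, Fin.sum_univ_two, bMat_inv]
  ring

lemma eq_one_of_conj_apply_one_zero_eq_zero [CharP K 2] {g : SL2 K} (hg : g 1 0 = 0)
    (hw : (wMat K * g * (wMat K)⁻¹) 1 0 = 0) (hb : (bMat 1 * g * (bMat 1)⁻¹ : SL2 K) 1 0 = 0) :
    g = 1 := by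
  rw [conj_wMat_apply_one_zero] at hw
  rw [conj_bMat_apply_one_zero, hg, hw] at hb
  have hd : g 1 1 = g 0 0 := by linear_combination -hb
  have h00 : g 0 0 = 1 := frobenius_inj K 2 <| by
    simpa [frobenius_def, sq, hg, hd] using det_fin_two_eq_one g
  ext i j; fin_cases i <;> fin_cases j <;> simp [hg, hw, hd, h00]

/-- For a `K²`-subspace `L`, `x * y ∈ L` says that the column `(x, y)` represents a point
`x / y = x y / y²` of `L ∪ {∞} ⊆ ℙ¹(K)`. -/
def ColumnsIn (L : AddSubgroup K) (g : SL2 K) : Prop := ∀ j, g 0 j * g 1 j ∈ L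

lemma ColumnsIn.mul [CharP K 2] (hvs : ∀ s t : K, t ∈ L → s ^ 2 * t ∈ L) {g h : SL2 K}
    (hg : ColumnsIn L g) (hh : ColumnsIn L h) : ColumnsIn L (g * h) := by
  intro j
  -- in characteristic `2` the cross term has coefficient `g 0 0 * g 1 1 + g 0 1 * g 1 0 = det g`
  have key : (g * h) 0 j * (g * h) 1 j =
      h 0 j ^ 2 * (g 0 0 * g 1 0) + h 1 j ^ 2 * (g 0 1 * g 1 1) + h 0 j * h 1 j := by
    simp only [Matrix.SpecialLinearGroup.coe_mul, Matrix.mul_apply, Fin.sum_univ_two]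
    linear_combination h 0 j * h 1 j * det_fin_two_eq_one g +
      g 0 1 * g 1 0 * h 0 j * h 1 j * CharTwo.two_eq_zero (R := K)
  rw [key]
  exact add_mem (add_mem (hvs _ _ (hg 0)) (hvs _ _ (hg 1))) (hh j)

lemma columnsIn_aMat {t : K} (ht : t ∈ L) : ColumnsIn L (aMat t) := by
  intro j; fin_cases j <;> simp [ht]

lemma columnsIn_bMat {t : K} (ht : t ∈ L) : ColumnsIn L (bMat t) := by
  intro j; fin_cases j <;> simp [ht]

lemma columnsIn_of_mem [CharP K 2] (hvs : ∀ s t : K, t ∈ L → s ^ 2 * t ∈ L) {g : SL2 K}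
    (hg : g ∈ SL2L L) : ColumnsIn L g := by
  induction hg using Subgroup.closure_induction'' with
  | mem g hg =>
    obtain ⟨t, ht, rfl⟩ | ⟨t, ht, rfl⟩ := hg
    exacts [columnsIn_aMat ht, columnsIn_bMat ht]
  | inv_mem g hg =>
    obtain ⟨t, ht, rfl⟩ | ⟨t, ht, rfl⟩ := hg
    · rw [aMat_inv]; exact columnsIn_aMat (neg_mem ht)
    · rw [bMat_inv]; exact columnsIn_bMat (neg_mem ht)
  | one => intro j; fin_cases j <;> simp
  | mul g h _ _ hg hh => exact hg.mul hvs hh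

end SL2

namespace SL2L

lemma aMat_mem {t : K} (ht : t ∈ L) : aMat t ∈ SL2L L :=
  Subgroup.subset_closure (.inl ⟨t, ht, rfl⟩)

lemma bMat_mem {t : K} (ht : t ∈ L) : bMat t ∈ SL2L L :=
  Subgroup.subset_closure (.inr ⟨t, ht, rfl⟩)

lemma wMat_mem [CharP K 2] (h1 : (1 : K) ∈ L) : wMat K ∈ SL2L L := by
  rw [SL2.wMat_eq_aMat_mul_bMat_mul_aMat]
  exact mul_mem (mul_mem (aMat_mem h1) (bMat_mem h1)) (aMat_mem h1)

lemma diagMat_mem [CharP K 2] (h1 : (1 : K) ∈ L) (hvs : ∀ s t : K, t ∈ L → s ^ 2 * t ∈ L)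
    {σ : K} (hσL : σ ∈ L) (hσ : σ ≠ 0) : diagMat (Units.mk0 σ hσ) ∈ SL2L L := by
  have hσinv : σ⁻¹ ∈ L := by simpa using div_mem_of_mul_mem hvs (x := 1) (by simpa using hσL)
  rw [SL2.diagMat_mk0_eq]
  exact mul_mem (mul_mem (mul_mem (aMat_mem hσL) (bMat_mem hσinv)) (aMat_mem hσL))
    (wMat_mem h1)

lemma eq_top_of_aMat_bMat_mem (H : Subgroup (SL2L L))
    (ha : ∀ t (ht : t ∈ L), ⟨aMat t, aMat_mem ht⟩ ∈ H)
    (hb : ∀ t (ht : t ∈ L), ⟨bMat t, bMat_mem ht⟩ ∈ H) : H = ⊤ := by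
  have hgen : Subgroup.closure (((↑) : SL2L L → SL2 K) ⁻¹' (setA L ∪ setAop L)) = ⊤ :=
    Subgroup.closure_closure_coe_preimage
  rw [eq_top_iff, ← hgen, Subgroup.closure_le]
  rintro ⟨_, _⟩ (⟨t, ht, rfl⟩ | ⟨t, ht, rfl⟩)
  exacts [ha t ht, hb t ht]

lemma nontrivial (h1 : (1 : K) ∈ L) : Nontrivial (SL2L L) := by
  refine nontrivial_of_ne ⟨aMat 1, aMat_mem h1⟩ 1 fun h => one_ne_zero (α := K) ?_
  simpa using congrArg (fun g : SL2L L => (g : SL2 K) 0 1) h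

lemma exists_mem_apply_one_zero_ne_zero [CharP K 2] (h1 : (1 : K) ∈ L)
    {H : Subgroup (SL2L L)} [hH : H.Normal] (hH0 : H ≠ ⊥) :
    ∃ n ∈ H, (n : SL2 K) 1 0 ≠ 0 := by
  by_contra! hlow
  refine hH0 ((Subgroup.eq_bot_iff_forall H).2 fun n hn => Subtype.ext ?_)
  exact SL2.eq_one_of_conj_apply_one_zero_eq_zero (hlow n hn)
    (hlow _ (hH.conj_mem n hn ⟨wMat K, wMat_mem h1⟩))
    (hlow _ (hH.conj_mem n hn ⟨bMat 1, bMat_mem h1⟩))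

lemma exists_mem_mul_apply_one_zero_eq_zero [CharP K 2]
    (hvs : ∀ s t : K, t ∈ L → s ^ 2 * t ∈ L) {H : Subgroup (SL2L L)} [hH : H.Normal]
    {n : SL2L L} (hnH : n ∈ H) (hn : (n : SL2 K) 1 0 ≠ 0) (γ : SL2L L) :
    ∃ m ∈ H, ((m * γ : SL2L L) : SL2 K) 1 0 = 0 := by
  rcases eq_or_ne ((γ : SL2 K) 1 0) 0 with hγ | hγ
  · exact ⟨1, H.one_mem, by simpa using hγ⟩
  have hγL : (γ : SL2 K) 0 0 / (γ : SL2 K) 1 0 ∈ L :=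
    div_mem_of_mul_mem hvs (SL2.columnsIn_of_mem hvs γ.2 0)
  have hnL : (n : SL2 K) 1 1 / (n : SL2 K) 1 0 ∈ L := div_mem_of_mul_mem hvs <| by
    simpa [Matrix.SpecialLinearGroup.coe_inv, Matrix.adjugate_fin_two]
      using SL2.columnsIn_of_mem hvs (n⁻¹).2 0
  let a : SL2L L := ⟨aMat _, aMat_mem (add_mem hγL hnL)⟩
  refine ⟨a * n * a⁻¹, hH.conj_mem n hnH a, ?_⟩
  change (aMat _ * (n : SL2 K) * (aMat _)⁻¹ * (γ : SL2 K) : SL2 K) 1 0 = 0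
  rw [SL2.conj_aMat_mul_apply_one_zero]
  field_simp
  ring

lemma sup_aHom_range_eq_top [CharP K 2] (h1 : (1 : K) ∈ L)
    (hvs : ∀ s t : K, t ∈ L → s ^ 2 * t ∈ L) {H : Subgroup (SL2L L)} [H.Normal] {n : SL2L L}
    (hnH : n ∈ H) (hn : (n : SL2 K) 1 0 ≠ 0) : H ⊔ SL2.aHom.range.subgroupOf (SL2L L) = ⊤ := by
  let w : SL2L L := ⟨wMat K, wMat_mem h1⟩
  -- `h = m w` fixes `∞`, so it normalises `a(K)`, and `b(t) = w a(t) w⁻¹ = m⁻¹ (h a(t) h⁻¹) m`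
  obtain ⟨m, hmH, hm⟩ := exists_mem_mul_apply_one_zero_eq_zero hvs hnH hn w
  refine eq_top_of_aMat_bMat_mem _ (fun t _ => Subgroup.mem_sup_right ⟨.ofAdd t, rfl⟩)
    fun t ht => ?_
  let a : SL2L L := ⟨aMat t, aMat_mem ht⟩
  have hconj : m * w * a * (m * w)⁻¹ ∈ SL2.aHom.range.subgroupOf (SL2L L) := by
    rw [Subgroup.mem_subgroupOf]
    exact ⟨.ofAdd _, (SL2.conj_aMat_of_apply_one_zero hm t).symm⟩
  have hb : (⟨bMat t, bMat_mem ht⟩ : SL2L L) = m⁻¹ * (m * w * a * (m * w)⁻¹) * m := by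
    ext1
    simp only [Subgroup.coe_mul, Subgroup.coe_inv, w, a, ← SL2.conj_wMat_aMat]
    group
  rw [hb]
  exact mul_mem (mul_mem (Subgroup.mem_sup_left (inv_mem hmH)) (Subgroup.mem_sup_right hconj))
    (Subgroup.mem_sup_left hmH)

lemma commutator_eq_top [CharP K 2] (h1 : (1 : K) ∈ L)
    (hvs : ∀ s t : K, t ∈ L → s ^ 2 * t ∈ L) {σ : K} (hσL : σ ∈ L) (hσ0 : σ ≠ 0) (hσ1 : σ ≠ 1) :
    commutator (SL2L L) = ⊤ := by
  have ha : ∀ u (hu : u ∈ L), ⟨aMat u, aMat_mem hu⟩ ∈ commutator (SL2L L) := by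
    intro u hu
    -- `a(u) = ⁅diag(σ), a(v)⁆` for `v = u / (σ - 1)²`, since `σ² - 1 = (σ - 1)²`
    have hv : ((σ - 1)⁻¹) ^ 2 * u ∈ L := hvs _ _ hu
    rw [commutator_def]
    convert Subgroup.commutator_mem_commutator
      (Subgroup.mem_top (⟨_, diagMat_mem h1 hvs hσL hσ0⟩ : SL2L L))
      (Subgroup.mem_top (⟨_, aMat_mem hv⟩ : SL2L L)) using 1
    ext1
    have hσ1' : σ - 1 ≠ 0 := sub_ne_zero.2 hσ1
    change aMat u = ⁅diagMat (Units.mk0 σ hσ0), aMat ((σ - 1)⁻¹ ^ 2 * u)⁆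
    rw [SL2.commutatorElement_diagMat_aMat, Units.val_mk0]
    congr 1
    field_simp
    linear_combination (1 - σ) * u * CharTwo.two_eq_zero (R := K)
  refine eq_top_of_aMat_bMat_mem _ ha fun u hu => ?_
  convert Subgroup.Normal.conj_mem inferInstance _ (ha u hu)
    ⟨wMat K, wMat_mem h1⟩ using 1
  ext1
  exact (SL2.conj_wMat_aMat u).symm

end SL2L

lemma exists_mem_ne_zero_ne_one [CharP K 2]
    (himperf : ¬ Function.Surjective fun x : K => x ^ 2) (hsq : ∀ x : K, x ^ 2 ∈ L) :
    ∃ σ ∈ L, σ ≠ 0 ∧ σ ≠ 1 := by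
  obtain ⟨y, hy⟩ := not_forall.1 himperf
  have hy0 : y ≠ 0 := fun h => hy ⟨0, by simp [h]⟩
  have hy1 : y ≠ 1 := fun h => hy ⟨1, by simp [h]⟩
  exact ⟨y ^ 2, hsq y, pow_ne_zero 2 hy0,
    fun h => hy1 (frobenius_inj K 2 (by simpa [frobenius_def] using h))⟩

/-- Timmesfeld's group `SL₂(L)` is a simple group. -/
theorem SL2L_isSimpleGroup
    [CharP K 2] (himperf : ¬ Function.Surjective fun x : K => x ^ 2)
    (L : AddSubgroup K) (hsq : ∀ x : K, x ^ 2 ∈ L)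
    (hvs : ∀ s t : K, t ∈ L → s ^ 2 * t ∈ L) :
    IsSimpleGroup ↥(SL2L L) := by
  have h1 : (1 : K) ∈ L := by simpa using hsq 1
  obtain ⟨σ, hσL, hσ0, hσ1⟩ := exists_mem_ne_zero_ne_one himperf hsq
  have := SL2L.nontrivial h1
  refine ⟨fun H _ => or_iff_not_imp_left.2 fun hH0 => ?_⟩
  obtain ⟨n, hnH, hn⟩ := SL2L.exists_mem_apply_one_zero_ne_zero h1 hH0
  have hcomm : commutator (SL2L L) ≤ H :=
    Subgroup.Normal.commutator_le_of_self_sup_commutative_eq_top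
      (SL2L.sup_aHom_range_eq_top h1 hvs hnH hn) inferInstance
  rwa [SL2L.commutator_eq_top h1 hvs hσL hσ0 hσ1, top_le_iff] at hcomm

end
end

section
/- Suppose in addition that L contains a subfield of codimension 1 over K²: there exist a subfield K₁ of K with K² ⊆ K₁ ⊆ L and an element u ∈ L such that L = K₁ + K²·u. Then the subgroup T of Kˣ generated by L \ {0} equals the set of nonzero elements of the subfield of K generated by L, and every element of T is a product of two elements of L \ {0}. -/
noncomputable section

variable {K : Type*} [Field K]

/-!
The field generated by `L = K₁ + K²u` is `K₁ + K₁u`: this set is closed under products because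
`u² ∈ K₁`, and under inverses because `x⁻¹ = (x⁻¹)² x` with `(x⁻¹)² ∈ K₁`. A nonzero element
`a + bu` of it is `a · 1` if `b = 0` and `b · (a/b + u)` otherwise, in both cases a product of
two nonzero elements of `L`, since `K₁ ⊆ L`.
-/

theorem Tgen_le_units_closure (L : AddSubgroup K) :
    Tgen L ≤ (Subfield.closure (L : Set K)).toSubmonoid.units :=
  (Subgroup.closure_le _).2 fun v hv =>
    have hv' : (v : K) ∈ Subfield.closure (L : Set K) := Subfield.subset_closure hv
    Submonoid.mem_units_of_val_mem_inv_val_mem _ hv' (by simpa using inv_mem hv')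

theorem mul_mem_Tgen {L : AddSubgroup K} {x y : K} (hx : x ∈ L) (hy : y ∈ L) (hx0 : x ≠ 0)
    (hy0 : y ≠ 0) : Units.mk0 (x * y) (mul_ne_zero hx0 hy0) ∈ Tgen L := by
  rw [Units.mk0_mul]
  exact mul_mem (Subgroup.subset_closure hx) (Subgroup.subset_closure hy)

namespace Subfield

variable (K₁ : Subfield K) (hK₁sq : ∀ x : K, x ^ 2 ∈ K₁) (u : K)

def adjoinSqrt : Subfield K where
  carrier := {x | ∃ a ∈ K₁, ∃ b ∈ K₁, x = a + b * u}
  zero_mem' := ⟨0, K₁.zero_mem, 0, K₁.zero_mem, by ring⟩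
  one_mem' := ⟨1, K₁.one_mem, 0, K₁.zero_mem, by ring⟩
  add_mem' := by
    rintro _ _ ⟨a, ha, b, hb, rfl⟩ ⟨a', ha', b', hb', rfl⟩
    exact ⟨a + a', K₁.add_mem ha ha', b + b', K₁.add_mem hb hb', by ring⟩
  neg_mem' := by
    rintro _ ⟨a, ha, b, hb, rfl⟩
    exact ⟨-a, K₁.neg_mem ha, -b, K₁.neg_mem hb, by ring⟩
  mul_mem' := by
    rintro _ _ ⟨a, ha, b, hb, rfl⟩ ⟨a', ha', b', hb', rfl⟩
    refine ⟨a * a' + b * b' * u ^ 2, ?_, a * b' + a' * b, ?_, by ring⟩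
    · exact K₁.add_mem (K₁.mul_mem ha ha') (K₁.mul_mem (K₁.mul_mem hb hb') (hK₁sq u))
    · exact K₁.add_mem (K₁.mul_mem ha hb') (K₁.mul_mem ha' hb)
  inv_mem' := by
    rintro _ ⟨a, ha, b, hb, rfl⟩
    have hsq := hK₁sq (a + b * u)⁻¹
    by_cases hx : a + b * u = 0
    · exact ⟨0, K₁.zero_mem, 0, K₁.zero_mem, by simp [hx]⟩
    refine ⟨(a + b * u)⁻¹ ^ 2 * a, K₁.mul_mem hsq ha, (a + b * u)⁻¹ ^ 2 * b,
      K₁.mul_mem hsq hb, ?_⟩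
    field_simp

variable {K₁ u}

variable {L : AddSubgroup K}

theorem coe_subset_of_forall_mem_iff
    (hL : ∀ y : K, y ∈ L ↔ ∃ c ∈ K₁, ∃ s : K, y = c + s ^ 2 * u) : (K₁ : Set K) ⊆ L :=
  fun c hc => (hL c).2 ⟨c, hc, 0, by ring⟩

theorem closure_le_adjoinSqrt
    (hL : ∀ y : K, y ∈ L ↔ ∃ c ∈ K₁, ∃ s : K, y = c + s ^ 2 * u) :
    closure (L : Set K) ≤ adjoinSqrt K₁ hK₁sq u :=
  closure_le.2 fun y hy => by
    obtain ⟨c, hc, s, rfl⟩ := (hL y).1 hy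
    exact ⟨c, hc, s ^ 2, hK₁sq s, rfl⟩

theorem exists_mul_eq_of_mem_adjoinSqrt
    (hL : ∀ y : K, y ∈ L ↔ ∃ c ∈ K₁, ∃ s : K, y = c + s ^ 2 * u) {x : K}
    (hx : x ∈ adjoinSqrt K₁ hK₁sq u) (hx0 : x ≠ 0) :
    ∃ y ∈ L, ∃ z ∈ L, y ≠ 0 ∧ z ≠ 0 ∧ x = y * z := by
  obtain ⟨a, ha, b, hb, rfl⟩ := hx
  have hK₁L := coe_subset_of_forall_mem_iff hL
  by_cases hb0 : b = 0
  · subst hb0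
    exact ⟨a, hK₁L ha, 1, hK₁L K₁.one_mem, by simpa using hx0, one_ne_zero, by ring⟩
  have hw : a / b + u ∈ L := (hL _).2 ⟨a / b, K₁.div_mem ha hb, 1, by ring⟩
  have hab : a + b * u = b * (a / b + u) := by field_simp
  rw [hab] at hx0 ⊢
  exact ⟨b, hK₁L hb, a / b + u, hw, hb0, right_ne_zero_of_mul hx0, rfl⟩

end Subfield

theorem Tgen_eq_units_of_field_of_codim_one_general
    (L : AddSubgroup K)
    (K₁ : Subfield K) (hK₁sq : ∀ x : K, x ^ 2 ∈ K₁)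
    (u : K)
    (hLeq : ∀ y : K, y ∈ L ↔ ∃ c ∈ K₁, ∃ s : K, y = c + s ^ 2 * u) :
    (∀ v : Kˣ, v ∈ Tgen L ↔ (v : K) ∈ Subfield.closure (L : Set K)) ∧
      ∀ v : Kˣ, v ∈ Tgen L → ∃ x ∈ L, ∃ y ∈ L, x ≠ 0 ∧ y ≠ 0 ∧ (v : K) = x * y := by
  have hclosure : ∀ v : Kˣ, (v : K) ∈ Subfield.closure (L : Set K) →
      v ∈ Tgen L ∧ ∃ x ∈ L, ∃ y ∈ L, x ≠ 0 ∧ y ≠ 0 ∧ (v : K) = x * y := by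
    intro v hv
    obtain ⟨x, hx, y, hy, hx0, hy0, hxy⟩ := Subfield.exists_mul_eq_of_mem_adjoinSqrt hK₁sq hLeq
      (Subfield.closure_le_adjoinSqrt hK₁sq hLeq hv) v.ne_zero
    have hv' : v = Units.mk0 (x * y) (mul_ne_zero hx0 hy0) := Units.ext hxy
    exact ⟨hv' ▸ mul_mem_Tgen hx hy hx0 hy0, x, hx, y, hy, hx0, hy0, hxy⟩
  have hTgen : ∀ v : Kˣ, v ∈ Tgen L → (v : K) ∈ Subfield.closure (L : Set K) :=
    fun v hv => (Tgen_le_units_closure L hv).1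
  exact ⟨fun v => ⟨hTgen v, fun hv => (hclosure v hv).1⟩,
    fun v hv => (hclosure v (hTgen v hv)).2⟩

/-- If `L` contains a subfield `K₁` of codimension `1` over `K²` (i.e. `L = K₁ + K²·u`
for some `u ∈ L`), then the subgroup `T` of `Kˣ` generated by `L \ {0}` is exactly the
set of nonzero elements of the subfield of `K` generated by `L`, and every element of
`T` is a product of two nonzero elements of `L`. -/
theorem Tgen_eq_units_of_field_of_codim_one
    [CharP K 2] (himperf : ¬ Function.Surjective fun x : K => x ^ 2)
    (L : AddSubgroup K) (hsq : ∀ x : K, x ^ 2 ∈ L)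
    (hvs : ∀ s t : K, t ∈ L → s ^ 2 * t ∈ L)
    (K₁ : Subfield K) (hK₁sq : ∀ x : K, x ^ 2 ∈ K₁)
    (hK₁L : (K₁ : Set K) ⊆ L) (u : K) (hu : u ∈ L)
    (hLeq : ∀ y : K, y ∈ L ↔ ∃ c ∈ K₁, ∃ s : K, y = c + s ^ 2 * u) :
    (∀ v : Kˣ, v ∈ Tgen L ↔ (v : K) ∈ Subfield.closure (L : Set K)) ∧
      ∀ v : Kˣ, v ∈ Tgen L → ∃ x ∈ L, ∃ y ∈ L, x ≠ 0 ∧ y ≠ 0 ∧ (v : K) = x * y :=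
  Tgen_eq_units_of_field_of_codim_one_general L K₁ hK₁sq u hLeq
end
end

section
/- Let a, b ∈ K be 2-independent over K², i.e. 1, a, b, ab are linearly independent over K², and let L = K² + a·K² + b·K². Then every nonzero element of the subfield K²(a,b) of K generated by K² ∪ {a,b} is a product of two nonzero elements of L; consequently the subgroup of Kˣ generated by L \ {0} equals the set of nonzero elements of K²(a,b). -/
noncomputable section

variable {K : Type*} [Field K]

/-- The additive subgroup `L = K² + a·K² + b·K²` of `K`. -/
def Lset (a b : K) : Set K := {x : K | ∃ c₀ c₁ c₂ : K, x = c₀ ^ 2 + c₁ ^ 2 * a + c₂ ^ 2 * b}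

/-- The subfield `K²(a,b)` of `K` generated by `K² ∪ {a, b}`. -/
def Kab (a b : K) : Subfield K :=
  Subfield.closure ({x : K | ∃ y : K, x = y ^ 2} ∪ {a, b})

/-- The set `K² + aK² + bK² + abK²`. -/
def SsetAux (a b : K) : Set K :=
  {x : K | ∃ c₀ c₁ c₂ c₃ : K, x = c₀ ^ 2 + c₁ ^ 2 * a + c₂ ^ 2 * b + c₃ ^ 2 * (a * b)}

lemma mul_formula_aux [CharP K 2] (a b c₀ c₁ c₂ c₃ d₀ d₁ d₂ d₃ : K) :
    (c₀ ^ 2 + c₁ ^ 2 * a + c₂ ^ 2 * b + c₃ ^ 2 * (a * b)) *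
      (d₀ ^ 2 + d₁ ^ 2 * a + d₂ ^ 2 * b + d₃ ^ 2 * (a * b)) =
    (c₀ * d₀ + c₁ * d₁ * a + c₂ * d₂ * b + c₃ * d₃ * (a * b)) ^ 2
      + (c₀ * d₁ + c₁ * d₀ + c₂ * d₃ * b + c₃ * d₂ * b) ^ 2 * a
      + (c₀ * d₂ + c₂ * d₀ + c₁ * d₃ * a + c₃ * d₁ * a) ^ 2 * b
      + (c₀ * d₃ + c₃ * d₀ + c₁ * d₂ + c₂ * d₁) ^ 2 * (a * b) := by
  simp only [CharTwo.add_sq, mul_pow]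
  ring

lemma mem_SsetAux_iff_mem_Kab [CharP K 2] (a b z : K) :
    z ∈ SsetAux a b ↔ z ∈ Kab a b := by
  constructor
  · rintro ⟨c₀, c₁, c₂, c₃, rfl⟩
    have hsq : ∀ c : K, c ^ 2 ∈ Kab a b := fun c =>
      Subfield.subset_closure (Or.inl ⟨c, rfl⟩)
    have ha : a ∈ Kab a b := Subfield.subset_closure (Or.inr (Or.inl rfl))
    have hb : b ∈ Kab a b := Subfield.subset_closure (Or.inr (Or.inr rfl))
    exact add_mem (add_mem (add_mem (hsq c₀) (mul_mem (hsq c₁) ha))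
      (mul_mem (hsq c₂) hb)) (mul_mem (hsq c₃) (mul_mem ha hb))
  · intro hz
    induction hz using Subfield.closure_induction with
    | mem x hx =>
      rcases hx with ⟨y, rfl⟩ | rfl | rfl
      · exact ⟨y, 0, 0, 0, by ring⟩
      · exact ⟨0, 1, 0, 0, by ring⟩
      · exact ⟨0, 0, 1, 0, by ring⟩
    | one => exact ⟨1, 0, 0, 0, by ring⟩
    | add x y hx hy ihx ihy =>
      obtain ⟨c₀, c₁, c₂, c₃, rfl⟩ := ihx
      obtain ⟨d₀, d₁, d₂, d₃, rfl⟩ := ihy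
      refine ⟨c₀ + d₀, c₁ + d₁, c₂ + d₂, c₃ + d₃, ?_⟩
      simp only [CharTwo.add_sq]
      ring
    | neg x hx ihx => rwa [CharTwo.neg_eq]
    | inv x hx ihx =>
      obtain ⟨c₀, c₁, c₂, c₃, rfl⟩ := ihx
      set w : K := c₀ ^ 2 + c₁ ^ 2 * a + c₂ ^ 2 * b + c₃ ^ 2 * (a * b) with hw
      by_cases h : w = 0
      · rw [h, inv_zero]; exact ⟨0, 0, 0, 0, by ring⟩
      · refine ⟨c₀ * w⁻¹, c₁ * w⁻¹, c₂ * w⁻¹, c₃ * w⁻¹, ?_⟩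
        have : (c₀ * w⁻¹) ^ 2 + (c₁ * w⁻¹) ^ 2 * a + (c₂ * w⁻¹) ^ 2 * b
            + (c₃ * w⁻¹) ^ 2 * (a * b) = w * (w⁻¹ * w⁻¹) := by rw [hw]; ring
        rw [this, ← mul_assoc, mul_inv_cancel₀ h, one_mul]
    | mul x y hx hy ihx ihy =>
      obtain ⟨c₀, c₁, c₂, c₃, rfl⟩ := ihx
      obtain ⟨d₀, d₁, d₂, d₃, rfl⟩ := ihy
      exact ⟨_, _, _, _, mul_formula_aux a b c₀ c₁ c₂ c₃ d₀ d₁ d₂ d₃⟩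

/-- If `a, b ∈ K` are `2`-independent over `K²` (i.e. `1, a, b, ab` are linearly
independent over `K²`) and `L = K² + aK² + bK²`, then every nonzero element of the
subfield `K²(a,b)` is a product of two nonzero elements of `L`; consequently the
subgroup of `Kˣ` generated by `L \ {0}` is exactly the set of nonzero elements of
`K²(a,b)`. -/
theorem products_in_Kab
    [CharP K 2] (a b : K)
    (hind : ∀ c₀ c₁ c₂ c₃ : K,
      c₀ ^ 2 + c₁ ^ 2 * a + c₂ ^ 2 * b + c₃ ^ 2 * (a * b) = 0 →
      c₀ = 0 ∧ c₁ = 0 ∧ c₂ = 0 ∧ c₃ = 0) :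
    (∀ z : K, z ≠ 0 → z ∈ Kab a b →
        ∃ x ∈ Lset a b, ∃ y ∈ Lset a b, x ≠ 0 ∧ y ≠ 0 ∧ z = x * y) ∧
      ∀ v : Kˣ, v ∈ Subgroup.closure {u : Kˣ | (u : K) ∈ Lset a b} ↔ (v : K) ∈ Kab a b := by
  have hmain : ∀ z : K, z ≠ 0 → z ∈ Kab a b →
      ∃ x ∈ Lset a b, ∃ y ∈ Lset a b, x ≠ 0 ∧ y ≠ 0 ∧ z = x * y := by
    intro z hz hzK
    obtain ⟨c₀, c₁, c₂, c₃, rfl⟩ := (mem_SsetAux_iff_mem_Kab a b z).2 hzK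
    set z : K := c₀ ^ 2 + c₁ ^ 2 * a + c₂ ^ 2 * b + c₃ ^ 2 * (a * b) with hzdef
    by_cases h3 : c₃ = 0
    · refine ⟨z, ⟨c₀, c₁, c₂, by rw [hzdef, h3]; ring⟩, 1, ⟨1, 0, 0, by ring⟩,
        hz, one_ne_zero, (mul_one z).symm⟩
    · set x : K := c₁ ^ 2 + c₃ ^ 2 * b with hx
      have hx0 : x ≠ 0 := by
        intro h
        rw [hx] at h
        exact h3 (hind c₁ 0 c₃ 0 (by linear_combination h)).2.2.1
      -- z * x lands in Lset
      have hmul := mul_formula_aux a b c₀ c₁ c₂ c₃ c₁ 0 c₃ 0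
      have h2 : (2 : K) = 0 := CharTwo.two_eq_zero
      have hzx : z * x = (c₀ * c₁ + c₂ * c₃ * b) ^ 2
          + (c₁ * c₁ + c₃ * c₃ * b) ^ 2 * a + (c₀ * c₃ + c₂ * c₁) ^ 2 * b := by
        rw [hzdef, hx]
        calc (c₀ ^ 2 + c₁ ^ 2 * a + c₂ ^ 2 * b + c₃ ^ 2 * (a * b)) * (c₁ ^ 2 + c₃ ^ 2 * b)
            = (c₀ ^ 2 + c₁ ^ 2 * a + c₂ ^ 2 * b + c₃ ^ 2 * (a * b)) *
              (c₁ ^ 2 + 0 ^ 2 * a + c₃ ^ 2 * b + 0 ^ 2 * (a * b)) := by ring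
          _ = _ := by rw [hmul]; linear_combination (2 * c₁ ^ 2 * c₃ ^ 2 * (a * b)) * h2
      refine ⟨z * x, ⟨_, _, _, hzx⟩, x⁻¹, ⟨c₁ * x⁻¹, 0, c₃ * x⁻¹, ?_⟩,
        mul_ne_zero hz hx0, inv_ne_zero hx0, ?_⟩
      · have : (c₁ * x⁻¹) ^ 2 + (0 : K) ^ 2 * a + (c₃ * x⁻¹) ^ 2 * b
            = x * (x⁻¹ * x⁻¹) := by rw [hx]; ring
        rw [this, ← mul_assoc, mul_inv_cancel₀ hx0, one_mul]
      · rw [mul_assoc, mul_inv_cancel₀ hx0, mul_one]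
  refine ⟨hmain, fun v => ⟨?_, ?_⟩⟩
  · intro hv
    induction hv using Subgroup.closure_induction with
    | mem u hu =>
      obtain ⟨c₀, c₁, c₂, hu⟩ := hu
      exact (mem_SsetAux_iff_mem_Kab a b _).1 ⟨c₀, c₁, c₂, 0, by rw [hu]; ring⟩
    | one => simpa using one_mem (Kab a b)
    | mul x y hx hy ihx ihy => simpa using mul_mem ihx ihy
    | inv x hx ihx => simpa using inv_mem ihx
  · intro hv
    obtain ⟨x, hxL, y, hyL, hx0, hy0, hxy⟩ := hmain (v : K) v.ne_zero hv
    have : v = Units.mk0 x hx0 * Units.mk0 y hy0 := by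
      ext; simpa using hxy
    rw [this]
    exact mul_mem (Subgroup.subset_closure hxL) (Subgroup.subset_closure hyL)

end
end

section
/- Let K be a field of prime characteristic p and let R be an additive subgroup of K such that x^p ∈ R for every x ∈ K and c^p·r ∈ R for every c ∈ K and r ∈ R. Then the set S = {a ∈ K : a·r ∈ R for all r ∈ R} is a subfield of K containing K^p = {x^p : x ∈ K} (in particular S is closed under multiplicative inverses of its nonzero elements), and R is closed under multiplication by elements of S, i.e. R is an S-subspace of K. -/
/-!
The stabilizer `{a | a • R ⊆ R}` of an additive subgroup `R` is always a subring. In a field it is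
moreover closed under inverses as soon as `R` is stable under multiplication by `n`-th powers
for some `n > 0`: for `a` in the stabilizer, `a⁻¹ * r = (a⁻¹) ^ n * (a ^ (n - 1) * r) ∈ R`.
-/

namespace AddSubgroup

variable {A : Type*} [Ring A]

def mulStabilizer (R : AddSubgroup A) : Subring A where
  carrier := {a | ∀ r ∈ R, a * r ∈ R}
  mul_mem' {a b} ha hb r hr := by rw [mul_assoc]; exact ha _ (hb r hr)
  one_mem' r hr := by rwa [one_mul]
  add_mem' {a b} ha hb r hr := by rw [add_mul]; exact R.add_mem (ha r hr) (hb r hr)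
  zero_mem' r _ := by rw [zero_mul]; exact R.zero_mem
  neg_mem' {a} ha r hr := by rw [neg_mul]; exact R.neg_mem (ha r hr)

end AddSubgroup

theorem inv_pow_succ_mul_pow {G : Type*} [GroupWithZero G] (a : G) (k : ℕ) :
    a⁻¹ ^ (k + 1) * a ^ k = a⁻¹ := by
  rcases eq_or_ne a 0 with rfl | ha
  · simp
  · rw [pow_succ', mul_assoc, inv_pow, inv_mul_cancel₀ (pow_ne_zero k ha), mul_one]

namespace AddSubgroup

variable {K : Type*} [Field K] {R : AddSubgroup K} {n : ℕ}

theorem inv_mem_mulStabilizer (hn : 0 < n) (hR : ∀ c : K, ∀ r ∈ R, c ^ n * r ∈ R) {a : K}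
    (ha : a ∈ R.mulStabilizer) : a⁻¹ ∈ R.mulStabilizer := by
  obtain ⟨k, rfl⟩ := Nat.exists_eq_add_of_lt hn
  intro r hr
  have hpow : a ^ k * r ∈ R := R.mulStabilizer.pow_mem ha k r hr
  have h := hR a⁻¹ _ hpow
  rwa [← mul_assoc, zero_add, inv_pow_succ_mul_pow] at h

def mulStabilizerField (hn : 0 < n) (hR : ∀ c : K, ∀ r ∈ R, c ^ n * r ∈ R) : Subfield K :=
  { R.mulStabilizer with inv_mem' := fun _ ha => inv_mem_mulStabilizer hn hR ha }

end AddSubgroup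

theorem stabilizer_is_subfield_general
    {K : Type*} [Field K] (p : ℕ) (hp : p.Prime)
    (R : AddSubgroup K)
    (hRmul : ∀ c : K, ∀ r ∈ R, c ^ p * r ∈ R) :
    ∃ S : Subfield K,
      (S : Set K) = {a : K | ∀ r ∈ R, a * r ∈ R} ∧
      (∀ x : K, x ^ p ∈ S) ∧
      ∀ a ∈ S, ∀ r ∈ R, a * r ∈ R :=
  ⟨AddSubgroup.mulStabilizerField hp.pos hRmul, rfl, fun x => hRmul x, fun _ ha => ha⟩

/-- Let `K` have prime characteristic `p` and let `R` be an additive subgroup of `K`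
containing `K^p` and stable under multiplication by `p`-th powers. Then the
multiplicative stabilizer `S = {a ∈ K : a·R ⊆ R}` is a subfield of `K` containing
`K^p`, and `R` is an `S`-subspace of `K` (closed under multiplication by `S`). -/
theorem stabilizer_is_subfield
    {K : Type*} [Field K] (p : ℕ) (hp : p.Prime) [CharP K p]
    (R : AddSubgroup K)
    (hRp : ∀ x : K, x ^ p ∈ R)
    (hRmul : ∀ c : K, ∀ r ∈ R, c ^ p * r ∈ R) :
    ∃ S : Subfield K,
      (S : Set K) = {a : K | ∀ r ∈ R, a * r ∈ R} ∧
      (∀ x : K, x ^ p ∈ S) ∧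
      ∀ a ∈ S, ∀ r ∈ R, a * r ∈ R :=
  stabilizer_is_subfield_general p hp R hRmul
end

section
/- Let K be a field of prime characteristic p and let L be a subfield with K^p ⊆ L ⊆ K. Let B₁ ⊆ L be a p-basis of L over K^p, i.e. L is generated as a field by K^p ∪ B₁ and for every finite subset C ⊆ B₁ the field K^p(C) has degree p^{|C|} over K^p. Let B₂ ⊆ K be a p-basis of K over L, i.e. K is generated as a field by L ∪ B₂ and for every finite subset C ⊆ B₂ the field L(C) has degree p^{|C|} over L. Write B₂^{(p)} = {x^p : x ∈ B₂}. Then B₁ ∪ B₂^{(p)} is a p-basis of L over L^p: L is generated as a field by L^p ∪ B₁ ∪ B₂^{(p)}, and for every finite subset C ⊆ B₁ ∪ B₂^{(p)} the field L^p(C) has degree p^{|C|} over L^p. -/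
/-!
Split a finite `C ⊆ B₁ ∪ B₂^{(p)}` into `C₁ ⊆ B₁` and `C₂ = D^{(p)}` with `D ⊆ B₂`, and compute
`[L^p(C) : L^p]` in the tower `L^p ⊆ L^p(C₂) ⊆ L^p(C₂)(C₁)`. Frobenius maps `L(D)` isomorphically
onto `L^p(C₂)`, so the lower step has degree `[L(D) : L] = p^|C₂|`. The upper step has degree at
most `p^|C₁|`, since `c^p ∈ L^p` for `c ∈ C₁ ⊆ L`, and at least `[K^p(C₁) : K^p] = p^|C₁|`, since
`L^p(C₂) ⊆ K^p` and enlarging the base field can only lower the degree of an adjunction.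
Generation is the computation `L^p(B₂^{(p)})(B₁) = (L(B₂))^p(B₁) = K^p(B₁) = L`.
-/

noncomputable section

variable {K : Type*} [Field K]

/-- The subfield `E(S)` of `K` generated by a subfield `E` together with a set `S`. -/
def adjoinSet (E : Subfield K) (S : Set K) : Subfield K := Subfield.closure (↑E ∪ S)

/-- The degree `[F : E]` of one subfield of `K` over another (`0` if `E ≰ F`). -/
noncomputable def sdeg (E F : Subfield K) : ℕ :=
  letI : Decidable (E ≤ F) := Classical.dec _
  if h : E ≤ F then
    letI : Algebra ↥E ↥F := (Subfield.inclusion h).toAlgebra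
    Module.finrank ↥E ↥F
  else 0

/-- `B ⊆ K` is `p`-independent over a subfield `E`:
`[E(C) : E] = p ^ |C|` for every finite subset `C` of `B`. -/
def IsPIndep (p : ℕ) (E : Subfield K) (B : Set K) : Prop :=
  ∀ C : Finset K, ↑C ⊆ B → sdeg E (adjoinSet E ↑C) = p ^ C.card

/-- `B` is a `p`-basis of the subfield `F` over `E`: it is `p`-independent over `E`
and `F` is generated as a field by `E ∪ B`. -/
def IsPBasis (p : ℕ) (E F : Subfield K) (B : Set K) : Prop :=
  IsPIndep p E B ∧ adjoinSet E B = F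

/-- The subfield `K^p` of `K`, the image of the Frobenius endomorphism. -/
def pPowSubfield (K : Type*) [Field K] (p : ℕ) (hp : p.Prime) [CharP K p] : Subfield K :=
  haveI : ExpChar K p := .prime hp
  (frobenius K p).fieldRange

/-- The subfield `L^p`, the image of a subfield `L` under the Frobenius endomorphism. -/
def frobMap (p : ℕ) (hp : p.Prime) [CharP K p] (L : Subfield K) : Subfield K :=
  haveI : ExpChar K p := .prime hp
  L.map (frobenius K p)

theorem le_adjoinSet (E : Subfield K) (S : Set K) : E ≤ adjoinSet E S :=
  fun _ hx => Subfield.subset_closure (Or.inl hx)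

theorem subset_adjoinSet (E : Subfield K) (S : Set K) : S ⊆ adjoinSet E S :=
  fun _ hx => Subfield.subset_closure (Or.inr hx)

theorem adjoinSet_le {E F : Subfield K} {S : Set K} (hE : E ≤ F) (hS : S ⊆ F) :
    adjoinSet E S ≤ F :=
  Subfield.closure_le.2 (Set.union_subset hE hS)

theorem adjoinSet_union (E : Subfield K) (S T : Set K) :
    adjoinSet E (S ∪ T) = adjoinSet (adjoinSet E S) T := by
  refine le_antisymm (adjoinSet_le ?_ ?_) (adjoinSet_le ?_ ?_)
  · exact (le_adjoinSet E S).trans (le_adjoinSet _ T)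
  · exact Set.union_subset ((subset_adjoinSet E S).trans (le_adjoinSet _ T))
      (subset_adjoinSet _ T)
  · exact adjoinSet_le (le_adjoinSet _ _)
      (Set.subset_union_left.trans (subset_adjoinSet E _))
  · exact Set.subset_union_right.trans (subset_adjoinSet E _)

theorem adjoinSet_empty (E : Subfield K) : adjoinSet E ∅ = E := by
  rw [adjoinSet, Set.union_empty, Subfield.closure_eq]

theorem map_adjoinSet {L : Type*} [Field L] (f : K →+* L) (E : Subfield K) (S : Set K) :
    (adjoinSet E S).map f = adjoinSet (E.map f) (f '' S) := by
  rw [adjoinSet, adjoinSet, RingHom.map_field_closure, Set.image_union, Subfield.coe_map]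

theorem sdeg_eq_relfinrank {E F : Subfield K} (h : E ≤ F) : sdeg E F = E.relfinrank F := by
  let : Algebra E F := (Subfield.inclusion h).toAlgebra
  rw [Subfield.relfinrank_eq_finrank_of_le h, sdeg, dif_pos h]
  exact LinearEquiv.finrank_eq
    { toFun := fun x => ⟨x.1, x.2⟩
      invFun := fun x => ⟨x.1, x.2⟩
      map_add' := fun _ _ => rfl
      map_smul' := fun _ _ => rfl
      left_inv := fun _ => rfl
      right_inv := fun _ => rfl }

theorem isPIndep_iff {p : ℕ} {E : Subfield K} {B : Set K} :
    IsPIndep p E B ↔ ∀ C : Finset K, ↑C ⊆ B → E.relfinrank (adjoinSet E C) = p ^ C.card := by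
  simp only [IsPIndep, sdeg_eq_relfinrank (le_adjoinSet _ _)]

theorem relfinrank_adjoinSet_singleton (E : Subfield K) {x : K} (hx : IsIntegral E x) :
    E.relfinrank (adjoinSet E {x}) = (minpoly E x).natDegree := by
  have : Subfield.extendScalars (le_adjoinSet E {x}) = IntermediateField.adjoin E {x} := by
    apply IntermediateField.toSubfield_injective
    rw [IntermediateField.adjoin_toSubfield, Subfield.extendScalars_toSubfield, adjoinSet]
    exact congrArg (fun s => Subfield.closure (s ∪ {x})) Subtype.range_coe.symm
  rw [Subfield.relfinrank_eq_finrank_of_le (le_adjoinSet E {x}), this]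
  exact IntermediateField.adjoin.finrank hx

theorem relfinrank_adjoinSet_insert (E : Subfield K) (a : K) (S : Set K) :
    E.relfinrank (adjoinSet E (insert a S)) = E.relfinrank (adjoinSet E S) *
      (adjoinSet E S).relfinrank (adjoinSet (adjoinSet E S) {a}) := by
  rw [Set.insert_eq, Set.union_comm, adjoinSet_union,
    Subfield.relfinrank_mul_relfinrank (le_adjoinSet _ _) (le_adjoinSet _ _)]

theorem isIntegral_of_subfield_le {E' E : Subfield K} (h : E' ≤ E) {x : K}
    (hx : IsIntegral E' x) : IsIntegral E x := by
  let : Algebra E' E := (Subfield.inclusion h).toAlgebra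
  have : IsScalarTower E' E K := .of_algebraMap_eq' rfl
  exact hx.tower_top

theorem aeval_X_pow_sub_C_pow_eq_zero {p : ℕ} {E : Subfield K} {x : K} (hx : x ^ p ∈ E) :
    Polynomial.aeval x (Polynomial.X ^ p - Polynomial.C (⟨x ^ p, hx⟩ : E)) = 0 := by
  simp only [map_sub, Polynomial.aeval_X_pow, Polynomial.aeval_C]
  exact sub_self _

theorem isIntegral_of_pow_mem {p : ℕ} (hp : p ≠ 0) {E : Subfield K} {x : K} (hx : x ^ p ∈ E) :
    IsIntegral E x :=
  ⟨_, Polynomial.monic_X_pow_sub_C _ hp, aeval_X_pow_sub_C_pow_eq_zero hx⟩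

theorem relfinrank_adjoinSet_singleton_le_of_pow_mem {p : ℕ} (hp : p ≠ 0) {E : Subfield K}
    {x : K} (hx : x ^ p ∈ E) : E.relfinrank (adjoinSet E {x}) ≤ p := by
  rw [relfinrank_adjoinSet_singleton E (isIntegral_of_pow_mem hp hx),
    ← Polynomial.natDegree_X_pow_sub_C (n := p) (r := (⟨x ^ p, hx⟩ : E))]
  exact Polynomial.natDegree_le_natDegree <| minpoly.degree_le_of_ne_zero E x
    (Polynomial.monic_X_pow_sub_C _ hp).ne_zero (aeval_X_pow_sub_C_pow_eq_zero hx)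

theorem relfinrank_adjoinSet_singleton_le_of_le {E' E : Subfield K} (h : E' ≤ E) {x : K}
    (hx : IsIntegral E' x) :
    E.relfinrank (adjoinSet E {x}) ≤ E'.relfinrank (adjoinSet E' {x}) := by
  let : Algebra E' E := (Subfield.inclusion h).toAlgebra
  have : IsScalarTower E' E K := .of_algebraMap_eq' rfl
  rw [relfinrank_adjoinSet_singleton E hx.tower_top, relfinrank_adjoinSet_singleton E' hx]
  exact Polynomial.natDegree_le_of_dvd (minpoly.dvd_map_of_isScalarTower E' E x)
    ((Polynomial.map_ne_zero_iff (algebraMap E' E).injective).2 (minpoly.ne_zero hx)) |>.trans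
    Polynomial.natDegree_map_le

theorem relfinrank_adjoinSet_le_pow {p : ℕ} (hp : p ≠ 0) {E : Subfield K} (C : Finset K)
    (hC : ∀ x ∈ C, x ^ p ∈ E) : E.relfinrank (adjoinSet E C) ≤ p ^ C.card := by
  classical
  induction C using Finset.induction with
  | empty => simp [adjoinSet_empty]
  | insert a C ha ih =>
    rw [Finset.coe_insert, relfinrank_adjoinSet_insert, Finset.card_insert_of_notMem ha, pow_succ]
    exact Nat.mul_le_mul (ih fun x hx => hC x (Finset.mem_insert_of_mem hx))
      (relfinrank_adjoinSet_singleton_le_of_pow_mem hp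
        (le_adjoinSet E C (hC a (Finset.mem_insert_self a C))))

theorem relfinrank_adjoinSet_le_of_le {E' E : Subfield K} (h : E' ≤ E) (C : Finset K)
    (hC : ∀ x ∈ C, IsIntegral E' x) :
    E.relfinrank (adjoinSet E C) ≤ E'.relfinrank (adjoinSet E' C) := by
  classical
  induction C using Finset.induction with
  | empty => simp [adjoinSet_empty]
  | insert a C ha ih =>
    rw [Finset.coe_insert, relfinrank_adjoinSet_insert, relfinrank_adjoinSet_insert]
    exact Nat.mul_le_mul (ih fun x hx => hC x (Finset.mem_insert_of_mem hx))
      (relfinrank_adjoinSet_singleton_le_of_le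
        (Subfield.closure_mono (Set.union_subset_union_left _ h))
        (isIntegral_of_subfield_le (le_adjoinSet E' C) (hC a (Finset.mem_insert_self a C))))

theorem relfinrank_adjoinSet_eq_pow_of_le {p : ℕ} (hp : p ≠ 0) {E E' : Subfield K} (h : E ≤ E')
    {C : Finset K} (hC : ∀ x ∈ C, x ^ p ∈ E)
    (hC' : E'.relfinrank (adjoinSet E' C) = p ^ C.card) :
    E.relfinrank (adjoinSet E C) = p ^ C.card :=
  (relfinrank_adjoinSet_le_pow hp C hC).antisymm <| hC' ▸
    relfinrank_adjoinSet_le_of_le h C fun x hx => isIntegral_of_pow_mem hp (hC x hx)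

theorem IsPIndep.image {L : Type*} [Field L] {p : ℕ} {E : Subfield K} {B : Set K}
    (hB : IsPIndep p E B) (f : K →+* L) : IsPIndep p (E.map f) (f '' B) := by
  classical
  rw [isPIndep_iff] at hB ⊢
  intro C hC
  obtain ⟨D, hDB, rfl⟩ := Finset.subset_set_image_iff.1 hC
  rw [Finset.coe_image, ← map_adjoinSet, Subfield.relfinrank_map_map, hB D hDB,
    Finset.card_image_of_injective D f.injective]

theorem IsPIndep.union {p : ℕ} (hp : p ≠ 0) {E E' : Subfield K} (h : E ≤ E') {A B : Set K}
    (hA : IsPIndep p E' A) (hAp : ∀ a ∈ A, a ^ p ∈ E) (hB : IsPIndep p E B) (hBE' : B ⊆ E') :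
    IsPIndep p E (A ∪ B) := by
  classical
  rw [isPIndep_iff] at hA hB ⊢
  intro C hC
  set CA := C.filter (· ∈ A)
  set CB := C.filter (· ∉ A)
  have hCB : ↑CB ⊆ B := fun x hx => by
    obtain ⟨hxC, hxA⟩ := Finset.mem_filter.1 hx
    exact (hC hxC).resolve_left hxA
  have hCA : ↑CA ⊆ A := fun x hx => (Finset.mem_filter.1 hx).2
  have hEB : adjoinSet E CB ≤ E' := adjoinSet_le h (hCB.trans hBE')
  rw [← Finset.filter_union_filter_not_eq (· ∈ A) C, Finset.union_comm, Finset.coe_union,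
    adjoinSet_union, ← Subfield.relfinrank_mul_relfinrank (le_adjoinSet _ _) (le_adjoinSet _ _),
    hB CB hCB, relfinrank_adjoinSet_eq_pow_of_le hp hEB
      (fun x hx => le_adjoinSet E CB (hAp x (hCA hx))) (hA CA hCA),
    ← pow_add, Finset.card_union_of_disjoint (Finset.disjoint_filter_filter_not _ _ _).symm]

theorem pBasis_of_intermediate_field_general
    (p : ℕ) (hp : p.Prime) [CharP K p]
    (L : Subfield K)
    (B₁ : Set K)
    (hB₁ : IsPBasis p (pPowSubfield K p hp) L B₁)
    (B₂ : Set K) (hB₂ : IsPBasis p L ⊤ B₂) :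
    IsPBasis p (frobMap p hp L) L (B₁ ∪ (fun x : K => x ^ p) '' B₂) := by
  have : ExpChar K p := .prime hp
  have hKp : pPowSubfield K p hp = (⊤ : Subfield K).map (frobenius K p) :=
    RingHom.fieldRange_eq_map _
  have hB₁L : B₁ ⊆ L := hB₁.2 ▸ subset_adjoinSet _ _
  change IsPBasis p (L.map (frobenius K p)) L (B₁ ∪ frobenius K p '' B₂)
  constructor
  · refine IsPIndep.union hp.ne_zero ((Subfield.gc_map_comap _).monotone_l le_top)
      (hKp ▸ hB₁.1) (fun a ha => ⟨a, hB₁L ha, rfl⟩) (hB₂.1.image _) ?_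
    rintro _ ⟨b, -, rfl⟩
    exact ⟨b, trivial, rfl⟩
  · rw [Set.union_comm, adjoinSet_union, ← map_adjoinSet, hB₂.2, ← hKp, hB₁.2]

/-- If `B₁` is a `p`-basis of `L` over `K^p` and `B₂` is a `p`-basis of `K` over `L`,
then `B₁ ∪ B₂^{(p)}` is a `p`-basis of `L` over `L^p`. -/
theorem pBasis_of_intermediate_field
    (p : ℕ) (hp : p.Prime) [CharP K p]
    (L : Subfield K) (hKpL : pPowSubfield K p hp ≤ L)
    (B₁ : Set K) (hB₁L : B₁ ⊆ (L : Set K))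
    (hB₁ : IsPBasis p (pPowSubfield K p hp) L B₁)
    (B₂ : Set K) (hB₂ : IsPBasis p L ⊤ B₂) :
    IsPBasis p (frobMap p hp L) L (B₁ ∪ (fun x : K => x ^ p) '' B₂) :=
  pBasis_of_intermediate_field_general p hp L B₁ hB₁ B₂ hB₂

end
end

section
/- Let K be a field of prime characteristic p and let L be a subfield with K^p ⊆ L ⊆ K. Let B₁ ⊆ L be a p-basis of L over K^p and let B₂ ⊆ K be a p-basis of K over L; write B₂^{(p)} = {x^p : x ∈ B₂}. Then L is recovered as the intersection over all n ≥ 1 of the subfields K^{p^n}(B₁ ∪ B₂^{(p)}) of K, where K^{p^n} denotes the image of the n-th iterate of the Frobenius endomorphism of K. -/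
noncomputable section

variable {K : Type*} [Field K]

@[reducible] private def Mset (p n : ℕ) (S : Set K) : Subfield K :=
  Subfield.closure ({y : K | ∃ x : K, y = x ^ p ^ n} ∪ S)

private lemma pow_mem_closure_image (p : ℕ) (hp : p.Prime) [CharP K p] (k : ℕ)
    {T : Set K} {x : K} (hx : x ∈ Subfield.closure T) :
    x ^ p ^ k ∈ Subfield.closure ((fun y : K => y ^ p ^ k) '' T) := by
  haveI : ExpChar K p := .prime hp
  have himg : (fun y : K => y ^ p ^ k) '' T = (iterateFrobenius K p k) '' T := by
    ext w; simp [iterateFrobenius_def]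
  rw [show x ^ p ^ k = iterateFrobenius K p k x from (iterateFrobenius_def ..).symm,
    himg, ← RingHom.map_field_closure]
  exact ⟨x, hx, rfl⟩

private lemma Mset_eq (p : ℕ) (hp : p.Prime) [CharP K p]
    (L : Subfield K) (hKpL : pPowSubfield K p hp ≤ L)
    (B₁ : Set K) (hB₁L : B₁ ⊆ (L : Set K))
    (hB₁eq : Subfield.closure (↑(pPowSubfield K p hp) ∪ B₁) = L)
    (B₂ : Set K) (hB₂eq : Subfield.closure (↑L ∪ B₂) = ⊤)
    (n : ℕ) : Mset p (n + 1) (B₁ ∪ (fun x : K => x ^ p) '' B₂) = L := by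
  haveI : ExpChar K p := .prime hp
  set S : Set K := B₁ ∪ (fun x : K => x ^ p) '' B₂ with hS
  have hpow_mem : ∀ (x : K) (k : ℕ), x ^ p ^ (k + 1) ∈ pPowSubfield K p hp := fun x k =>
    ⟨x ^ p ^ k, by rw [frobenius_def, ← pow_mul, ← pow_succ]⟩
  have hMle : ∀ m, Mset p (m + 1) S ≤ L := by
    intro m
    apply Subfield.closure_le.2
    rintro y (⟨x, rfl⟩ | hy)
    · exact hKpL (hpow_mem x m)
    · rcases hy with hy | ⟨b, _, rfl⟩
      · exact hB₁L hy
      · exact hKpL ⟨b, rfl⟩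
  have hLle : ∀ m, L ≤ Mset p (m + 1) S := by
    intro m
    induction m with
    | zero =>
      rw [← hB₁eq]
      apply Subfield.closure_le.2
      rintro y (hy | hy)
      · obtain ⟨x, rfl⟩ := hy
        exact Subfield.subset_closure (Or.inl ⟨x, by rw [pow_one]; rfl⟩)
      · exact Subfield.subset_closure (Or.inr (Or.inl hy))
    | succ m ih =>
      have hA : ∀ z ∈ Mset p (m + 1) S, z ^ p ∈ Mset p (m + 2) S := by
        intro z hz
        have h1 := pow_mem_closure_image p hp 1 hz
        rw [pow_one] at h1
        refine Subfield.closure_le.2 ?_ h1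
        rintro w ⟨v, hv, rfl⟩
        show v ^ p ∈ Mset p (m + 2) S
        rcases hv with ⟨x, rfl⟩ | hv
        · exact Subfield.subset_closure (Or.inl ⟨x, by rw [← pow_mul, ← pow_succ]⟩)
        · have hmem : v ∈ Mset p (m + 2) S := Subfield.subset_closure (Set.mem_union_right _ hv)
          exact Subfield.pow_mem _ hmem p
      have hA' : ∀ y ∈ L, ∀ k : ℕ, y ^ p ^ (k + 1) ∈ Mset p (m + 2) S := by
        intro y hy k
        induction k with
        | zero => rw [pow_one]; exact hA y (ih hy)
        | succ k ihk =>
          have h1 : y ^ p ^ (k + 1) ∈ Mset p (m + 1) S := ih (hMle (m + 1) ihk)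
          have h2 := hA _ h1
          rwa [← pow_mul, ← pow_succ] at h2
      have hB : ∀ x : K, x ^ p ^ (m + 1) ∈ Mset p (m + 2) S := by
        intro x
        have hx : x ∈ Subfield.closure (↑L ∪ B₂) := hB₂eq ▸ Subfield.mem_top x
        have h1 := pow_mem_closure_image p hp (m + 1) hx
        refine Subfield.closure_le.2 ?_ h1
        rintro w ⟨v, hv, rfl⟩
        show v ^ p ^ (m + 1) ∈ Mset p (m + 2) S
        rcases hv with hv | hv
        · exact hA' v hv m
        · have hvp : v ^ p ∈ Mset p (m + 2) S :=
            Subfield.subset_closure (Or.inr (Or.inr ⟨v, hv, rfl⟩))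
          have h2 := Subfield.pow_mem _ hvp (p ^ m)
          rwa [← pow_mul, ← pow_succ'] at h2
      refine le_trans ih (Subfield.closure_le.2 ?_)
      rintro y (⟨x, rfl⟩ | hy)
      · exact hB x
      · exact Subfield.subset_closure (Or.inr hy)
  exact le_antisymm (hMle n) (hLle n)

/-- If `B₁` is a `p`-basis of `L` over `K^p` and `B₂` is a `p`-basis of `K` over `L`,
then `L` is recovered as `⋂_{n ≥ 1} K^{pⁿ}(B₁ ∪ B₂^{(p)})`. -/
theorem subfield_eq_iInter_frobenius_adjoin
    (p : ℕ) (hp : p.Prime) [CharP K p]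
    (L : Subfield K) (hKpL : pPowSubfield K p hp ≤ L)
    (B₁ : Set K) (hB₁L : B₁ ⊆ (L : Set K))
    (hB₁ : IsPBasis p (pPowSubfield K p hp) L B₁)
    (B₂ : Set K) (hB₂ : IsPBasis p L ⊤ B₂) :
    (L : Set K) =
      ⋂ (n : ℕ) (_ : 1 ≤ n),
        (Subfield.closure
          ({y : K | ∃ x : K, y = x ^ p ^ n} ∪ (B₁ ∪ (fun x : K => x ^ p) '' B₂)) : Set K) := by
  have key : ∀ n : ℕ, 1 ≤ n →
      Subfield.closure ({y : K | ∃ x : K, y = x ^ p ^ n} ∪ (B₁ ∪ (fun x : K => x ^ p) '' B₂))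
        = L := by
    intro n hn
    obtain ⟨m, rfl⟩ := Nat.exists_eq_add_of_le hn
    have := Mset_eq p hp L hKpL B₁ hB₁L hB₁.2 B₂ hB₂.2 m
    rw [Nat.add_comm 1 m]
    exact this
  ext x
  simp only [Set.mem_iInter, SetLike.mem_coe]
  constructor
  · intro hx n hn
    rw [key n hn]
    exact hx
  · intro h
    have h1 := h 1 le_rfl
    rwa [key 1 le_rfl] at h1

end
end
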